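/- Let f∞ > 1, k, u∞ be real numbers with |k||u∞| < 1. Then the inequality f∞·(|k| + |u∞|)/(1 + |k||u∞|) ≤ 1 holds if and only if |k| ≤ 1/f∞ and |u∞| ≤ (1 − f∞|k|)/(f∞ − |k|). -/
import Mathlib


theorem stmt_0 (f k u : ℝ) (hf : 1 < f) (hku : |k| * |u| < 1) :
    f * (|k| + |u|) / (1 + |k| * |u|) ≤ 1 ↔
      (|k| ≤ 1 / f ∧ |u| ≤ (1 - f * |k|) / (f - |k|)) := by
  set a := |k| with ha'
  set b := |u| with hb'
  have ha : 0 ≤ a := abs_nonneg k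
  have hb : 0 ≤ b := abs_nonneg u
  have h1 : 0 < 1 + a * b := by nlinarith
  have hf0 : 0 < f := by linarith
  rw [div_le_one h1]
  constructor
  · intro h
    have hfa : f * a ≤ 1 := by nlinarith [mul_nonneg ha hb, sq_nonneg (a - 1), mul_nonneg hb (mul_nonneg ha ha), sq_nonneg (a*b - 1), mul_nonneg ha ha]
    have hfagt : a < f := by nlinarith
    refine ⟨by rw [le_div_iff₀ hf0]; linarith, ?_⟩
    rw [le_div_iff₀ (by linarith)]
    nlinarith
  · rintro ⟨h1', h2⟩
    have hfa : f * a ≤ 1 := by rw [le_div_iff₀ hf0] at h1'; linarith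
    have hfagt : a < f := by nlinarith
    rw [le_div_iff₀ (by linarith)] at h2
    nlinarith
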